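/- Let C be an arrovian voting system on at least three alternatives. If in some profile the aggregate satisfies a ≈ b (indifference: a ≽ b and b ≽ a), then the set N = {i ∈ I : a ≈_i b} of individually indifferent voters is a strongly decisive subset. -/

import Mathlib

variable {A I : Type*}

/-- A partial preorder: a reflexive and transitive binary relation. -/
def IsPPO (P : A → A → Prop) : Prop := Reflexive P ∧ Transitive P

/-- A linear (total) preorder: reflexive, transitive and complete. -/
def IsLPO (P : A → A → Prop) : Prop := Reflexive P ∧ Transitive P ∧ ∀ a b, P a b ∨ P b a

/-- A profile of partial preorders. -/
def IsPPOProfile (P : I → A → A → Prop) : Prop := ∀ i, IsPPO (P i)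

/-- A profile of linear (total) preorders. -/
def IsLPOProfile (P : I → A → A → Prop) : Prop := ∀ i, IsLPO (P i)

/-- Strict preference. -/
def StrictPref (P : A → A → Prop) (a b : A) : Prop := P a b ∧ ¬ P b a

/-- Indifference. -/
def Indiff (P : A → A → Prop) (a b : A) : Prop := P a b ∧ P b a

/-- The set `A` contains at least three distinct alternatives. -/
def ThreeAlts (A : Type*) : Prop := ∃ a b c : A, a ≠ b ∧ b ≠ c ∧ a ≠ c

/-- Unanimity. -/
def Unanimity (C : (I → A → A → Prop) → A → A → Prop) : Prop :=
  ∀ P, IsPPOProfile P → ∀ a b : A, (∀ i, P i a b) → C P a b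

/-- Independence of irrelevant alternatives. -/
def IIA (C : (I → A → A → Prop) → A → A → Prop) : Prop :=
  ∀ P P' : I → A → A → Prop, IsPPOProfile P → IsPPOProfile P' → ∀ a b : A,
    {i | P i a b} = {i | P' i a b} → {i | P i b a} = {i | P' i b a} →
    (C P a b ↔ C P' a b)

/-- Neutrality: `C (ρ*P) = ρ*(C P)` for every permutation `ρ` of the alternatives. -/
def Neutrality (C : (I → A → A → Prop) → A → A → Prop) : Prop :=
  ∀ (ρ : Equiv.Perm A) (P : I → A → A → Prop), IsPPOProfile P →
    ∀ x y : A, C (fun i a b => P i (ρ.symm a) (ρ.symm b)) x y ↔ C P (ρ.symm x) (ρ.symm y)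

/-- Monotonicity. -/
def Monotonicity (C : (I → A → A → Prop) → A → A → Prop) : Prop :=
  ∀ P P' : I → A → A → Prop, IsPPOProfile P → IsPPOProfile P' → ∀ a b : A,
    {i | P i a b} ⊆ {i | P' i a b} → {i | P' i b a} ⊆ {i | P i b a} →
    C P a b → C P' a b

/-- `J` is a decisive set: unanimous strict preference on `J` forces weak aggregate preference. -/
def Decisive (C : (I → A → A → Prop) → A → A → Prop) (J : Set I) : Prop :=
  ∀ P, IsPPOProfile P → ∀ a b : A, (∀ j ∈ J, StrictPref (P j) a b) → C P a b

/-- `J` is a strongly decisive set: unanimous weak preference on `J` forces weak aggregate preference. -/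
def SDecisive (C : (I → A → A → Prop) → A → A → Prop) (J : Set I) : Prop :=
  ∀ P, IsPPOProfile P → ∀ a b : A, (∀ j ∈ J, P j a b) → C P a b


/-!
By IIA, whether the aggregate of a profile `W` ranks `u ≽ v` depends only on the two voter sets
`{i | u ≽ᵢ v}` and `{i | v ≽ᵢ u}`; say that such a pair of sets forces `u ≽ v`. If one pair forces
`u ≽ v` and another forces `v ≽ w`, both can be realised in a single profile supported on
`{u, v, w}`, together with any pair on `(u, w)` compatible with transitivity of the voters; by
transitivity of the aggregate, that pair then forces `u ≽ w`. Composing the pairs of the given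
profile on `(a, b)` and `(b, a)` with unanimous pairs through a third alternative shows that
`(N, N)` forces `a ≽ c`, then `x ≽ y` for all `x ≠ y`, and finally that `(S, T)` forces `x ≽ y`
whenever `N ⊆ S`, which is strong decisiveness of `N`.
-/

section Forcing

variable {ι : Type*} {C : (I → A → A → Prop) → A → A → Prop}

def tableProfile (e : ι → A) (E : ι → ι → Set I) : I → A → A → Prop :=
  fun i s t => s = t ∨ ∃ p q, e p = s ∧ e q = t ∧ i ∈ E p q

lemma isPPOProfile_tableProfile {e : ι → A} {E : ι → ι → Set I} (he : e.Injective)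
    (hE : ∀ p q r, p ≠ r → E p q ∩ E q r ⊆ E p r) : IsPPOProfile (tableProfile e E) := by
  refine fun i => ⟨fun s => Or.inl rfl, ?_⟩
  rintro s t r (rfl | ⟨p, q, rfl, rfl, hpq⟩) h
  · exact h
  rcases h with rfl | ⟨q', r, hq', rfl, hqr⟩
  · exact .inr ⟨p, q, rfl, rfl, hpq⟩
  · obtain rfl := he hq'
    by_cases hpr : p = r
    · exact .inl (congrArg e hpr)
    · exact .inr ⟨p, r, rfl, rfl, hE p _ r hpr ⟨hpq, hqr⟩⟩

lemma setOf_tableProfile {e : ι → A} (E : ι → ι → Set I) (he : e.Injective) {p q : ι}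
    (hpq : p ≠ q) : {i | tableProfile e E i (e p) (e q)} = E p q := by
  ext i
  simp only [tableProfile, Set.mem_ofPred_eq, he.eq_iff, hpq, false_or]
  constructor
  · rintro ⟨p', q', rfl, rfl, h⟩
    exact h
  · exact fun h => ⟨p, q, rfl, rfl, h⟩

variable (C) in
def Forces (u v : A) (S T : Set I) : Prop :=
  ∀ W : I → A → A → Prop, IsPPOProfile W → {i | W i u v} = S → {i | W i v u} = T → C W u v

lemma forces_of_aggregate (hIIA : IIA C) {W : I → A → A → Prop} (hW : IsPPOProfile W)
    {u v : A} (h : C W u v) : Forces C u v {i | W i u v} {i | W i v u} :=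
  fun _ hW' h₁ h₂ => (hIIA W _ hW hW' u v h₁.symm h₂.symm).mp h

lemma forces_univ (hU : Unanimity C) (u v : A) (T : Set I) : Forces C u v Set.univ T :=
  fun W hW h _ => hU W hW u v fun i => (h ▸ Set.mem_univ i : i ∈ {i | W i u v})

/-- The six inclusions are exactly the transitivity conditions of the profile on `{u, v, w}`
realising all six voter sets at once. -/
lemma Forces.trans (hC : ∀ P, IsPPOProfile P → IsPPO (C P)) (hIIA : IIA C) {u v w : A}
    (huv : u ≠ v) (hvw : v ≠ w) (huw : u ≠ w) {S₁ S₂ T₁ T₂ U U' : Set I}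
    (h₁ : Forces C u v S₁ S₂) (h₂ : Forces C v w T₁ T₂)
    (h₀₁₂ : S₁ ∩ T₁ ⊆ U) (h₀₂₁ : U ∩ T₂ ⊆ S₁) (h₁₀₂ : S₂ ∩ U ⊆ T₁)
    (h₂₁₀ : T₂ ∩ S₂ ⊆ U') (h₂₀₁ : U' ∩ S₁ ⊆ T₂) (h₁₂₀ : T₁ ∩ U' ⊆ S₂) :
    Forces C u w U U' := by
  intro W hW hU hU'
  set e : Fin 3 → A := ![u, v, w]
  set E : Fin 3 → Fin 3 → Set I := ![![.univ, S₁, U], ![S₂, .univ, T₁], ![U', T₂, .univ]]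
  have he : e.Injective := by
    intro p q hpq
    fin_cases p <;> fin_cases q <;> simp_all [e, eq_comm]
  have hV : IsPPOProfile (tableProfile e E) := by
    refine isPPOProfile_tableProfile he fun p q r hpr => ?_
    fin_cases p <;> fin_cases q <;> fin_cases r <;> simp_all [E]
  have hsupp : ∀ p q, p ≠ q → {i | tableProfile e E i (e p) (e q)} = E p q :=
    fun p q => setOf_tableProfile E he
  have hVuv : C (tableProfile e E) u v := h₁ _ hV (hsupp 0 1 (by decide)) (hsupp 1 0 (by decide))
  have hVvw : C (tableProfile e E) v w := h₂ _ hV (hsupp 1 2 (by decide)) (hsupp 2 1 (by decide))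
  have hVuw := (hC _ hV).2 hVuv hVvw
  exact (hIIA _ W hV hW u w ((hsupp 0 2 (by decide)).trans hU.symm)
    ((hsupp 2 0 (by decide)).trans hU'.symm)).mp hVuw

lemma Forces.replace_right (hC : ∀ P, IsPPOProfile P → IsPPO (C P)) (hU : Unanimity C)
    (hIIA : IIA C) {u v w : A} {S T : Set I} (h : Forces C u v S T) (huv : u ≠ v) (hwu : w ≠ u)
    (hwv : w ≠ v) : Forces C u w S T :=
  h.trans hC hIIA huv hwv.symm hwu.symm (forces_univ hU v w .univ) (by tauto_set) (by tauto_set)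
    (by tauto_set) (by tauto_set) (by tauto_set) (by tauto_set)

lemma Forces.replace_left (hC : ∀ P, IsPPOProfile P → IsPPO (C P)) (hU : Unanimity C)
    (hIIA : IIA C) {u v w : A} {S T : Set I} (h : Forces C u v S T) (huv : u ≠ v) (hwu : w ≠ u)
    (hwv : w ≠ v) : Forces C w v S T :=
  (forces_univ hU w u .univ).trans hC hIIA hwu huv hwv h (by tauto_set) (by tauto_set)
    (by tauto_set) (by tauto_set) (by tauto_set) (by tauto_set)

lemma exists_ne_ne (hA : ThreeAlts A) (a b : A) : ∃ c, c ≠ a ∧ c ≠ b := by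
  obtain ⟨p, q, r, hpq, hqr, hpr⟩ := hA
  by_contra! h
  obtain rfl | hpa := eq_or_ne p a
  · exact hqr ((h q hpq.symm).trans (h r hpr.symm).symm)
  obtain rfl | hqa := eq_or_ne q a
  · exact hpr ((h p hpa).trans (h r hqr.symm).symm)
  exact hpq ((h p hpa).trans (h q hqa).symm)

lemma Forces.spread (hA : ThreeAlts A) (hC : ∀ P, IsPPOProfile P → IsPPO (C P))
    (hU : Unanimity C) (hIIA : IIA C) {S T : Set I} {a c : A} (h : Forces C a c S T)
    (hac : a ≠ c) {x y : A} (hxy : x ≠ y) : Forces C x y S T := by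
  have from_a : ∀ {y}, a ≠ y → Forces C a y S T := fun {y} hay => by
    obtain rfl | hyc := eq_or_ne y c
    · exact h
    · exact h.replace_right hC hU hIIA hac hay.symm hyc
  have to_ne_a : ∀ {x y}, x ≠ y → y ≠ a → Forces C x y S T := fun {x y} hxy hya => by
    obtain rfl | hxa := eq_or_ne x a
    · exact from_a hxy
    · exact (from_a hya.symm).replace_left hC hU hIIA hya.symm hxa hxy
  by_cases hya : y = a
  · obtain ⟨d, hdx, hdy⟩ := exists_ne_ne hA x y
    exact (to_ne_a hdx.symm (hya ▸ hdy)).replace_right hC hU hIIA hdx.symm hxy.symm hdy.symm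
  · exact to_ne_a hxy hya

lemma sDecisive_of_forces (hA : ThreeAlts A) (hC : ∀ P, IsPPOProfile P → IsPPO (C P))
    (hU : Unanimity C) (hIIA : IIA C) {N : Set I}
    (hN : ∀ x y : A, x ≠ y → Forces C x y N N) : SDecisive C N := by
  intro Q hQ x y hQN
  obtain rfl | hxy := eq_or_ne x y
  · exact (hC Q hQ).1 x
  obtain ⟨c, hcx, hcy⟩ := exists_ne_ne hA x y
  set T := {i | Q i y x}
  have hxc : Forces C x c N (T ∩ N) :=
    (hN x y hxy).trans hC hIIA hxy hcy.symm hcx.symm (forces_univ hU y c T)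
      (by tauto_set) (by tauto_set) (by tauto_set) (by tauto_set) (by tauto_set) (by tauto_set)
  have hcy' : Forces C c y N (T ∩ N) :=
    (forces_univ hU c x T).trans hC hIIA hcx hxy hcy (hN x y hxy)
      (by tauto_set) (by tauto_set) (by tauto_set) (by tauto_set) (by tauto_set) (by tauto_set)
  exact hxc.trans hC hIIA hcx.symm hcy hxy hcy' (by tauto_set) (by tauto_set) (by tauto_set)
    (by tauto_set) (by tauto_set) (by tauto_set) Q hQ rfl rfl

end Forcing

theorem strongly_decisive_support_general (C : (I → A → A → Prop) → A → A → Prop)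
    (hA : ThreeAlts A)
    (hC : ∀ P, IsPPOProfile P → IsPPO (C P))
    (hU : Unanimity C) (hIIA : IIA C) :
    ∀ P : I → A → A → Prop, IsPPOProfile P → ∀ a b : A,
      C P a b → C P b a → SDecisive C {i | Indiff (P i) a b} := by
  intro P hP a b hab hba
  obtain rfl | hab' := eq_or_ne a b
  · exact fun Q hQ x y hxy => hU Q hQ x y fun i => hxy i ⟨(hP i).1 a, (hP i).1 a⟩
  obtain ⟨c, hca, hcb⟩ := exists_ne_ne hA a b
  have hbc : Forces C b c {i | P i b a} {i | P i a b} :=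
    (forces_of_aggregate hIIA hP hba).replace_right hC hU hIIA hab'.symm hcb hca
  have hac : Forces C a c {i | Indiff (P i) a b} {i | Indiff (P i) a b} :=
    (forces_of_aggregate hIIA hP hab).trans hC hIIA hab' hcb.symm hca.symm hbc
      (by tauto_set) (by tauto_set) (by tauto_set) (by tauto_set) (by tauto_set) (by tauto_set)
  exact sDecisive_of_forces hA hC hU hIIA fun x y hxy =>
    hac.spread hA hC hU hIIA hca.symm hxy

theorem strongly_decisive_support [Fintype I] (C : (I → A → A → Prop) → A → A → Prop)
    (hA : ThreeAlts A)
    (hC : ∀ P, IsPPOProfile P → IsPPO (C P))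
    (hU : Unanimity C) (hIIA : IIA C) :
    ∀ P : I → A → A → Prop, IsPPOProfile P → ∀ a b : A,
      C P a b → C P b a → SDecisive C {i | Indiff (P i) a b} :=
  strongly_decisive_support_general C hA hC hU hIIA
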